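/- A Y error on the resource state of the Y(π/4) gate teleportation gadget propagates to a Y error after the gate: for every ψ ∈ ℂ², (⟨y₊| ⊗ 1)(CY(|−H⟩ ⊗ ψ)) = (−i/√2)·Y·Y(π/4)ψ and (⟨y₋| ⊗ 1)(CY(|−H⟩ ⊗ ψ)) = (i/√2)·Y·Y(−π/4)ψ, so replacing the resource |H⟩ by the errored state |−H⟩ produces, up to a global phase, exactly the output of the error-free gadget followed by a Y error. -/
import Mathlib


open Matrix Kronecker

def Ymat : Matrix (Fin 2) (Fin 2) ℂ := !![0, -Complex.I; Complex.I, 0]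

/-- The rotation `Y(θ) = cos(θ/2)·1 − i·sin(θ/2)·Y`. -/
noncomputable def Yrot (θ : ℝ) : Matrix (Fin 2) (Fin 2) ℂ :=
  (Real.cos (θ / 2) : ℂ) • (1 : Matrix (Fin 2) (Fin 2) ℂ)
    - (Complex.I * (Real.sin (θ / 2) : ℂ)) • Ymat

/-- `|−H⟩ = −sin(π/8)|0⟩ + cos(π/8)|1⟩`. -/
noncomputable def ketmH : Fin 2 → ℂ :=
  ![-(Real.sin (Real.pi / 8) : ℂ), (Real.cos (Real.pi / 8) : ℂ)]

/-- `|y₊⟩ = (|0⟩ + i|1⟩)/√2`. -/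
noncomputable def ketYplus : Fin 2 → ℂ := ((Real.sqrt 2 : ℂ))⁻¹ • ![1, Complex.I]

/-- `|y₋⟩ = (|0⟩ − i|1⟩)/√2`. -/
noncomputable def ketYminus : Fin 2 → ℂ := ((Real.sqrt 2 : ℂ))⁻¹ • ![1, -Complex.I]

/-- The controlled-`Y` gate `|0⟩⟨0| ⊗ 1 + |1⟩⟨1| ⊗ Y` (first factor is the control). -/
def CY : Matrix (Fin 2 × Fin 2) (Fin 2 × Fin 2) ℂ :=
  (!![1, 0; 0, 0] : Matrix (Fin 2) (Fin 2) ℂ) ⊗ₖ (1 : Matrix (Fin 2) (Fin 2) ℂ)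
    + (!![0, 0; 0, 1] : Matrix (Fin 2) (Fin 2) ℂ) ⊗ₖ Ymat

/-- Tensor product of two vectors in `ℂ²`. -/
def tens (v w : Fin 2 → ℂ) : Fin 2 × Fin 2 → ℂ := fun p => v p.1 * w p.2

/-- Contraction of the first tensor factor of a two-qubit vector with `⟨b|`,
i.e. the action of the 2×4 matrix `⟨b| ⊗ 1`. -/
noncomputable def contrFst (b : Fin 2 → ℂ) (x : Fin 2 × Fin 2 → ℂ) : Fin 2 → ℂ :=
  fun k => ∑ j : Fin 2, star (b j) * x (j, k)

theorem errored_gate_teleportation_Y_error :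
    (∀ ψ : Fin 2 → ℂ,
      contrFst ketYplus (CY.mulVec (tens ketmH ψ))
        = (-Complex.I * ((Real.sqrt 2 : ℂ))⁻¹) •
            (Ymat * Yrot (Real.pi / 4)).mulVec ψ) ∧
    (∀ ψ : Fin 2 → ℂ,
      contrFst ketYminus (CY.mulVec (tens ketmH ψ))
        = (Complex.I * ((Real.sqrt 2 : ℂ))⁻¹) •
            (Ymat * Yrot (-(Real.pi / 4))).mulVec ψ) := by
  have h4 : Real.pi / 4 / 2 = Real.pi / 8 := by ring
  have h4' : -(Real.pi / 4) / 2 = -(Real.pi / 8) := by ring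
  constructor <;> intro ψ <;> funext k <;> fin_cases k <;>
    simp only [contrFst, CY, Ymat, Yrot, ketmH, ketYplus, ketYminus, tens, mulVec,
      Matrix.mul_apply, kroneckerMap_apply, h4, h4', Real.cos_neg, Real.sin_neg,
      Fintype.sum_prod_type, Fin.sum_univ_two, dotProduct, Matrix.add_apply,
      Matrix.smul_apply, Matrix.sub_apply, Matrix.one_apply, Pi.smul_apply,
      Matrix.cons_val_zero, Matrix.cons_val_one, Matrix.head_cons, smul_eq_mul,
      Complex.ofReal_neg, star_mul', Complex.star_def, Complex.conj_I, map_inv₀,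
      Complex.conj_ofReal, RCLike.star_def, _root_.map_one] <;>
  · generalize (Real.cos (Real.pi/8) : ℂ) = c
    generalize (Real.sin (Real.pi/8) : ℂ) = s
    have hI : Complex.I ^ 2 = -1 := Complex.I_sq
    have hI4 : Complex.I ^ 4 = 1 := by rw [show (4:ℕ) = 2*2 from rfl, pow_mul, hI]; ring
    norm_num
    ring_nf
    simp only [hI, hI4]
    ring
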